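/- An element α of the C-algebra 𝟛^X (functions X → 𝟛 with pointwise operations) is an atom if and only if there exists a unique x₀ ∈ X with α(x₀) ∈ {T, U} (and α(x) = F for all other x). -/
import Mathlib


/-- The three truth values of McCarthy's three-valued logic. -/
inductive Three : Type
  | T | F | U
deriving DecidableEq

open Three

/-- Negation in `𝟛`. -/
def tneg : Three → Three
  | T => F
  | F => T
  | U => U

/-- McCarthy's left-sequential conjunction. -/
def tand : Three → Three → Three
  | T, x => x
  | F, _ => F
  | U, _ => U

/-- McCarthy's left-sequential disjunction. -/
def tor : Three → Three → Three
  | T, _ => T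
  | F, x => x
  | U, _ => U

/-- Pointwise disjunction on `𝟛^X`. -/
def fOr {X : Type*} (α β : X → Three) : X → Three := fun x => tor (α x) (β x)

/-- Pointwise conjunction on `𝟛^X`. -/
def fAnd {X : Type*} (α β : X → Three) : X → Three := fun x => tand (α x) (β x)

/-- Pointwise negation on `𝟛^X`. -/
def fNeg {X : Type*} (α : X → Three) : X → Three := fun x => tneg (α x)

/-- The constant function `F`, the bottom element of `𝟛^X`. -/
def bF {X : Type*} : X → Three := fun _ => F

/-- The order on `𝟛^X`: `α ≤ β` iff `α ∨ β = β`. -/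
def fLe {X : Type*} (α β : X → Three) : Prop := fOr α β = β

/-- `α` is an atom of `𝟛^X`: `α ≠ F` and any `b` with `F ≤ b ≤ α`, `b ≠ α` is `F`. -/
def IsAtom3 {X : Type*} (α : X → Three) : Prop :=
  α ≠ bF ∧ ∀ β : X → Three, fLe bF β → fLe β α → β ≠ α → β = bF

lemma tor_eq_iff (b a : Three) : tor b a = a ↔ b = F ∨ b = a := by
  cases b <;> cases a <;> simp [tor]

lemma fLe_iff {X : Type*} (β α : X → Three) : fLe β α ↔ ∀ x, β x = F ∨ β x = α x := by
  unfold fLe fOr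
  constructor
  · intro h x
    exact (tor_eq_iff _ _).1 (congrFun h x)
  · intro h
    funext x
    exact (tor_eq_iff _ _).2 (h x)

lemma bF_le {X : Type*} (β : X → Three) : fLe bF β := by
  funext x; rfl

lemma ne_F_iff (a : Three) : a ≠ F ↔ a = T ∨ a = U := by cases a <;> simp

/-- `α ∈ 𝟛^X` is an atom iff there is a unique `x₀` with `α x₀ ∈ {T, U}`. -/
theorem stmt9 {X : Type*} (α : X → Three) :
    IsAtom3 α ↔ ∃! x₀ : X, α x₀ = Three.T ∨ α x₀ = Three.U := by
  constructor
  · rintro ⟨hne, hmin⟩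
    have hx : ∃ x, α x ≠ F := by
      by_contra h
      push_neg at h
      exact hne (funext fun x => h x)
    obtain ⟨x₀, hx₀⟩ := hx
    refine ⟨x₀, (ne_F_iff _).1 hx₀, ?_⟩
    intro y hy
    by_contra hyx
    classical
    set β : X → Three := fun x => if x = x₀ then α x else F with hβ
    have hle : fLe β α := by
      rw [fLe_iff]
      intro x
      by_cases h : x = x₀ <;> simp [hβ, h]
    have hβne : β ≠ α := by
      intro h
      have := congrFun h y
      simp [hβ, hyx] at this
      exact (ne_F_iff _).2 hy this.symm
    have := hmin β (bF_le β) hle hβne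
    have := congrFun this x₀
    simp [hβ, bF] at this
    exact hx₀ this
  · rintro ⟨x₀, hx₀, huniq⟩
    constructor
    · intro h
      have := congrFun h x₀
      rw [bF] at this
      rcases hx₀ with h' | h' <;> simp [h'] at this
    · intro β _ hle hne
      rw [fLe_iff] at hle
      have hF : ∀ x, x ≠ x₀ → α x = F := by
        intro x hx
        by_contra hc
        exact hx (huniq x ((ne_F_iff _).1 hc))
      have hβ0 : β x₀ = F := by
        by_contra hc
        rcases hle x₀ with h | h
        · exact hc h
        · apply hne
          funext x
          by_cases hx : x = x₀
          · rw [hx, h]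
          · rcases hle x with h2 | h2
            · rw [h2, hF x hx]
            · exact h2
      funext x
      by_cases hx : x = x₀
      · rw [hx, hβ0]; rfl
      · rcases hle x with h2 | h2
        · exact h2
        · rw [h2, hF x hx]; rfl
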